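/- arXiv:1703.07664 — 3 statements merged into one kernel-verified Lean document; each statement's English description precedes it below -/
import Mathlib

section
/- Let {x, α, y} be an asymptotic orthonormal frame with cone Frenet formulas and cone curvature κ, and b, c > 0 with c > bκ(s) for all s. Let γ(s) = (1/√(2cb))(c·x(s) + b·y(s)) be the xy-Smarandache curve, reparametrized by arc length s* with ds*/ds = (c - bκ)/√(2cb). Then the unit tangent of γ equals α(s), and the second derivative of γ with respect to s* equals (√(2bc)κ/(c - bκ))·x(s) - (√(2bc)/(c - bκ))·y(s); consequently the cone curvature of γ, defined as -½⟨d²γ/ds*², d²γ/ds*²⟩, equals 2bcκ(s)/(c - bκ(s))². -/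
/-!
The cone Frenet formulas give `(c x + b y)' = (c - b κ) α`, so dividing by the speed `ds*/ds`
leaves the unit tangent `α`; differentiating once more and dividing by the speed again gives
`γ'' = (κ x - y) / (ds*/ds)`. Since `x`, `y` are null with `⟨x, y⟩ = 1`, the Minkowski square
of `a x - b y` is `-2ab`, which yields the curvature.
-/

noncomputable def mink (X Y : ℝ × ℝ × ℝ) : ℝ :=
  X.1 * Y.1 + X.2.1 * Y.2.1 - X.2.2 * Y.2.2

lemma mink_smul_sub_smul_self (a b : ℝ) (X Y : ℝ × ℝ × ℝ) :
    mink (a • X - b • Y) (a • X - b • Y) =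
      a ^ 2 * mink X X - 2 * a * b * mink X Y + b ^ 2 * mink Y Y := by
  simp only [mink, Prod.fst_sub, Prod.snd_sub, Prod.smul_fst, Prod.smul_snd, smul_eq_mul]
  ring

lemma mink_smul_sub_smul_self_of_null {X Y : ℝ × ℝ × ℝ} (hX : mink X X = 0)
    (hY : mink Y Y = 0) (hXY : mink X Y = 1) (a b : ℝ) :
    mink (a • X - b • Y) (a • X - b • Y) = -2 * a * b := by
  rw [mink_smul_sub_smul_self, hX, hY, hXY]
  ring

lemma HasDerivAt.eq_inv_smul_of_comp {E : Type*} [NormedAddCommGroup E] [NormedSpace ℝ E]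
    {F f : ℝ → E} {σ : ℝ → ℝ} {F' f' : E} {σ' s : ℝ}
    (hF : HasDerivAt F F' (σ s)) (hσ : HasDerivAt σ σ' s) (hσ' : σ' ≠ 0)
    (hf : HasDerivAt f f' s) (hFf : ∀ u, F (σ u) = f u) :
    F' = σ'⁻¹ • f' := by
  have hcomp := hF.scomp s hσ
  rw [show F ∘ σ = f from funext hFf] at hcomp
  rw [hf.unique hcomp, inv_smul_smul₀ hσ']

lemma hasDerivAt_smul_add_smul_of_cone_frenet {x α y : ℝ → ℝ × ℝ × ℝ} {κ : ℝ → ℝ}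
    (hx : ∀ s, HasDerivAt x (α s) s) (hy : ∀ s, HasDerivAt y (-(κ s) • α s) s)
    (a b c s : ℝ) :
    HasDerivAt (fun u => a • (c • x u + b • y u)) ((a * (c - b * κ s)) • α s) s := by
  refine ((((hx s).const_smul c).add ((hy s).const_smul b)).const_smul a).congr_deriv ?_
  module

theorem stmt5 (x α y : ℝ → ℝ × ℝ × ℝ) (κ : ℝ → ℝ)
    (hx : ∀ s, HasDerivAt x (α s) s)
    (hα : ∀ s, HasDerivAt α (κ s • x s - y s) s)
    (hy : ∀ s, HasDerivAt y (-(κ s) • α s) s)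
    (hframe : ∀ s, mink (x s) (x s) = 0 ∧ mink (y s) (y s) = 0 ∧
      mink (x s) (α s) = 0 ∧ mink (y s) (α s) = 0 ∧
      mink (x s) (y s) = 1 ∧ mink (α s) (α s) = 1)
    (b c : ℝ) (hb : 0 < b) (hc : 0 < c) (hbκ : ∀ s, b * κ s < c)
    (γ : ℝ → ℝ × ℝ × ℝ)
    (hγ : ∀ s, γ s = (1 / Real.sqrt (2 * c * b)) • (c • x s + b • y s))
    (σ : ℝ → ℝ)
    (hσ : ∀ s, HasDerivAt σ ((c - b * κ s) / Real.sqrt (2 * c * b)) s)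
    (Γ Γ' Γ'' : ℝ → ℝ × ℝ × ℝ)
    (hΓγ : ∀ s, Γ (σ s) = γ s)
    (hΓ' : ∀ t, HasDerivAt Γ (Γ' t) t)
    (hΓ'' : ∀ t, HasDerivAt Γ' (Γ'' t) t) :
    ∀ s, Γ' (σ s) = α s ∧
      Γ'' (σ s) = (Real.sqrt (2 * b * c) * κ s / (c - b * κ s)) • x s -
        (Real.sqrt (2 * b * c) / (c - b * κ s)) • y s ∧
      -(1 / 2) * mink (Γ'' (σ s)) (Γ'' (σ s)) =
        2 * b * c * κ s / (c - b * κ s) ^ 2 := by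
  set k := Real.sqrt (2 * c * b)
  have hk : 0 < k := Real.sqrt_pos.mpr (by positivity)
  have hk_sq : k ^ 2 = 2 * b * c := by rw [Real.sq_sqrt (by positivity)]; ring
  have hk_comm : Real.sqrt (2 * b * c) = k := by rw [mul_right_comm]
  have hd (s : ℝ) : c - b * κ s ≠ 0 := (sub_pos.mpr (hbκ s)).ne'
  have hspeed (s : ℝ) : (c - b * κ s) / k ≠ 0 := div_ne_zero (hd s) hk.ne'
  have htangent (s : ℝ) : Γ' (σ s) = α s := by
    have hγ' : HasDerivAt γ ((1 / k * (c - b * κ s)) • α s) s := by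
      rw [funext hγ]
      exact hasDerivAt_smul_add_smul_of_cone_frenet hx hy (1 / k) b c s
    rw [(hΓ' (σ s)).eq_inv_smul_of_comp (hσ s) (hspeed s) hγ' hΓγ, smul_smul,
      one_div_mul_eq_div, inv_mul_cancel₀ (hspeed s), one_smul]
  have hnormal (s : ℝ) : Γ'' (σ s) = (k * κ s / (c - b * κ s)) • x s -
      (k / (c - b * κ s)) • y s := by
    rw [(hΓ'' (σ s)).eq_inv_smul_of_comp (hσ s) (hspeed s) (hα s) htangent]
    match_scalars <;> field_simp
  intro s
  obtain ⟨hxx, hyy, -, -, hxy, -⟩ := hframe s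
  refine ⟨htangent s, hk_comm ▸ hnormal s, ?_⟩
  rw [hnormal s, mink_smul_sub_smul_self_of_null hxx hyy hxy, ← hk_sq]
  field_simp
end

section
/- Let f : I → ℝ be smooth with f' > 0, x(s) = (1/(2f'))(f² - 1, 2f, f² + 1), α = x', and y = -x'' - ½⟨x'', x''⟩x. Then y(s) = -x''(s) - ½⟨x''(s), x''(s)⟩·x(s) satisfies ⟨y(s), y(s)⟩ = 0 and ⟨x(s), y(s)⟩ = 1. -/
theorem stmt17 (f : ℝ → ℝ) (hf : ContDiff ℝ (⊤ : ℕ∞) f)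
    (hf' : ∀ s, 0 < deriv f s)
    (x : ℝ → ℝ × ℝ × ℝ)
    (hx : ∀ s, x s = (1 / (2 * deriv f s)) •
      ((f s) ^ 2 - 1, 2 * f s, (f s) ^ 2 + 1))
    (y : ℝ → ℝ × ℝ × ℝ)
    (hy : ∀ s, y s = -(deriv (deriv x) s) -
      ((1 / 2) * mink (deriv (deriv x) s) (deriv (deriv x) s)) • x s) :
    ∀ s, mink (y s) (y s) = 0 ∧ mink (x s) (y s) = 1 := by
  set g : ℝ → ℝ := deriv f with hgdef
  have hfd : Differentiable ℝ f := hf.differentiable (by simp)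
  have hfi : ContDiff ℝ (⊤ : ℕ∞) f := hf.of_le (by simp)
  have hgc : ContDiff ℝ (⊤ : ℕ∞) g := (contDiff_infty_iff_deriv.mp hfi).2
  have hgd : Differentiable ℝ g := hgc.differentiable (by simp)
  set g1 : ℝ → ℝ := deriv g with hg1def
  have hg1c : ContDiff ℝ (⊤ : ℕ∞) g1 := (contDiff_infty_iff_deriv.mp hgc).2
  have hg1d : Differentiable ℝ g1 := hg1c.differentiable (by simp)
  set g2 : ℝ → ℝ := deriv g1 with hg2def
  have hG : ∀ s, g s ≠ 0 := fun s => ne_of_gt (hf' s)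
  have Hf : ∀ s, HasDerivAt f (g s) s := fun s => (hfd s).hasDerivAt
  have Hg : ∀ s, HasDerivAt g (g1 s) s := fun s => (hgd s).hasDerivAt
  have Hg1 : ∀ s, HasDerivAt g1 (g2 s) s := fun s => (hg1d s).hasDerivAt
  -- components of x
  have hxf : x = fun s => ((f s ^ 2 - 1) / (2 * g s), f s / g s, (f s ^ 2 + 1) / (2 * g s)) := by
    funext s
    rw [hx s]
    have h2 : (2 : ℝ) * g s ≠ 0 := mul_ne_zero two_ne_zero (hG s)
    simp only [Prod.smul_mk, smul_eq_mul]
    refine Prod.ext ?_ (Prod.ext ?_ ?_) <;> · show _ = _; field_simp [hG s]; try ring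
  -- first derivatives
  have hA : ∀ s, HasDerivAt (fun s => (f s ^ 2 - 1) / (2 * g s))
      ((2 * f s * g s ^ 2 - (f s ^ 2 - 1) * g1 s) / (2 * g s ^ 2)) s := by
    intro s
    have h2 : (2 : ℝ) * g s ≠ 0 := mul_ne_zero two_ne_zero (hG s)
    have := (((Hf s).fun_pow 2).sub_const 1).fun_div ((Hg s).const_mul 2) h2
    refine this.congr_deriv ?_
    field_simp [hG s]
    ring
  have hB : ∀ s, HasDerivAt (fun s => f s / g s)
      ((g s ^ 2 - f s * g1 s) / g s ^ 2) s := by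
    intro s
    have := (Hf s).fun_div (Hg s) (hG s)
    refine this.congr_deriv ?_
    field_simp [hG s]
  have hC : ∀ s, HasDerivAt (fun s => (f s ^ 2 + 1) / (2 * g s))
      ((2 * f s * g s ^ 2 - (f s ^ 2 + 1) * g1 s) / (2 * g s ^ 2)) s := by
    intro s
    have h2 : (2 : ℝ) * g s ≠ 0 := mul_ne_zero two_ne_zero (hG s)
    have := (((Hf s).fun_pow 2).add_const 1).fun_div ((Hg s).const_mul 2) h2
    refine this.congr_deriv ?_
    field_simp [hG s]
    ring
  have hdx : deriv x = fun s =>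
      ((2 * f s * g s ^ 2 - (f s ^ 2 - 1) * g1 s) / (2 * g s ^ 2),
       (g s ^ 2 - f s * g1 s) / g s ^ 2,
       (2 * f s * g s ^ 2 - (f s ^ 2 + 1) * g1 s) / (2 * g s ^ 2)) := by
    funext s
    have : HasDerivAt x
        ((2 * f s * g s ^ 2 - (f s ^ 2 - 1) * g1 s) / (2 * g s ^ 2),
         (g s ^ 2 - f s * g1 s) / g s ^ 2,
         (2 * f s * g s ^ 2 - (f s ^ 2 + 1) * g1 s) / (2 * g s ^ 2)) s := by
      rw [hxf]
      exact (hA s).prodMk ((hB s).prodMk (hC s))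
    exact this.deriv
  -- second derivatives
  have hA2 : ∀ s, HasDerivAt (fun s => (2 * f s * g s ^ 2 - (f s ^ 2 - 1) * g1 s) / (2 * g s ^ 2))
      ((2 * g s ^ 4 - 2 * f s * g1 s * g s ^ 2 - (f s ^ 2 - 1) * g2 s * g s
        + 2 * (f s ^ 2 - 1) * g1 s ^ 2) / (2 * g s ^ 3)) s := by
    intro s
    have h2 : (2 : ℝ) * g s ^ 2 ≠ 0 := mul_ne_zero two_ne_zero (pow_ne_zero 2 (hG s))
    have hnum : HasDerivAt (fun s => 2 * f s * g s ^ 2 - (f s ^ 2 - 1) * g1 s)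
        ((2 * g s) * g s ^ 2 + 2 * f s * (2 * g s ^ 1 * g1 s)
          - ((2 * f s ^ 1 * g s) * g1 s + (f s ^ 2 - 1) * g2 s)) s :=
      ((((Hf s).const_mul 2).mul ((Hg s).pow 2)).sub
        ((((Hf s).pow 2).sub_const 1).mul (Hg1 s)))
    have hden : HasDerivAt (fun s => 2 * g s ^ 2) (2 * (2 * g s ^ 1 * g1 s)) s :=
      ((Hg s).pow 2).const_mul 2
    have := hnum.fun_div hden h2
    refine this.congr_deriv ?_
    field_simp [hG s]
    ring
  have hB2 : ∀ s, HasDerivAt (fun s => (g s ^ 2 - f s * g1 s) / g s ^ 2)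
      ((-(g1 s) * g s ^ 2 - f s * g2 s * g s + 2 * f s * g1 s ^ 2) / g s ^ 3) s := by
    intro s
    have h2 : g s ^ 2 ≠ 0 := pow_ne_zero 2 (hG s)
    have hnum : HasDerivAt (fun s => g s ^ 2 - f s * g1 s)
        (2 * g s ^ 1 * g1 s - (g s * g1 s + f s * g2 s)) s :=
      ((Hg s).pow 2).sub ((Hf s).mul (Hg1 s))
    have hden : HasDerivAt (fun s => g s ^ 2) (2 * g s ^ 1 * g1 s) s := (Hg s).pow 2
    have := hnum.fun_div hden h2
    refine this.congr_deriv ?_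
    field_simp [hG s]
    ring
  have hC2 : ∀ s, HasDerivAt (fun s => (2 * f s * g s ^ 2 - (f s ^ 2 + 1) * g1 s) / (2 * g s ^ 2))
      ((2 * g s ^ 4 - 2 * f s * g1 s * g s ^ 2 - (f s ^ 2 + 1) * g2 s * g s
        + 2 * (f s ^ 2 + 1) * g1 s ^ 2) / (2 * g s ^ 3)) s := by
    intro s
    have h2 : (2 : ℝ) * g s ^ 2 ≠ 0 := mul_ne_zero two_ne_zero (pow_ne_zero 2 (hG s))
    have hnum : HasDerivAt (fun s => 2 * f s * g s ^ 2 - (f s ^ 2 + 1) * g1 s)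
        ((2 * g s) * g s ^ 2 + 2 * f s * (2 * g s ^ 1 * g1 s)
          - ((2 * f s ^ 1 * g s) * g1 s + (f s ^ 2 + 1) * g2 s)) s :=
      ((((Hf s).const_mul 2).mul ((Hg s).pow 2)).sub
        ((((Hf s).pow 2).add_const 1).mul (Hg1 s)))
    have hden : HasDerivAt (fun s => 2 * g s ^ 2) (2 * (2 * g s ^ 1 * g1 s)) s :=
      ((Hg s).pow 2).const_mul 2
    have := hnum.fun_div hden h2
    refine this.congr_deriv ?_
    field_simp [hG s]
    ring
  have hddx : ∀ s, deriv (deriv x) s =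
      ((2 * g s ^ 4 - 2 * f s * g1 s * g s ^ 2 - (f s ^ 2 - 1) * g2 s * g s
          + 2 * (f s ^ 2 - 1) * g1 s ^ 2) / (2 * g s ^ 3),
       (-(g1 s) * g s ^ 2 - f s * g2 s * g s + 2 * f s * g1 s ^ 2) / g s ^ 3,
       (2 * g s ^ 4 - 2 * f s * g1 s * g s ^ 2 - (f s ^ 2 + 1) * g2 s * g s
          + 2 * (f s ^ 2 + 1) * g1 s ^ 2) / (2 * g s ^ 3)) := by
    intro s
    have : HasDerivAt (deriv x)
        ((2 * g s ^ 4 - 2 * f s * g1 s * g s ^ 2 - (f s ^ 2 - 1) * g2 s * g s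
            + 2 * (f s ^ 2 - 1) * g1 s ^ 2) / (2 * g s ^ 3),
         (-(g1 s) * g s ^ 2 - f s * g2 s * g s + 2 * f s * g1 s ^ 2) / g s ^ 3,
         (2 * g s ^ 4 - 2 * f s * g1 s * g s ^ 2 - (f s ^ 2 + 1) * g2 s * g s
            + 2 * (f s ^ 2 + 1) * g1 s ^ 2) / (2 * g s ^ 3)) s := by
      rw [hdx]
      exact (hA2 s).prodMk ((hB2 s).prodMk (hC2 s))
    exact this.deriv
  -- main computation
  intro s
  have hGs := hG s
  have hS : mink (x s) (x s) = 0 := by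
    simp only [hxf]
    simp only [mink]
    field_simp [hG s]
    ring
  have hP : mink (x s) (deriv (deriv x) s) = -1 := by
    rw [hddx s]
    simp only [hxf]
    simp only [mink]
    field_simp [hG s]
    ring
  set X := x s
  set U := deriv (deriv x) s
  have hys : y s = -U - ((1 / 2) * mink U U) • X := hy s
  simp only [mink, Prod.fst_sub, Prod.snd_sub, Prod.fst_neg, Prod.snd_neg,
    Prod.smul_fst, Prod.smul_snd, smul_eq_mul] at hS hP ⊢
  rw [hys]
  simp only [mink, Prod.fst_sub, Prod.snd_sub, Prod.fst_neg, Prod.snd_neg,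
    Prod.smul_fst, Prod.smul_snd, smul_eq_mul]
  constructor
  · linear_combination (U.1 * U.1 + U.2.1 * U.2.1 - U.2.2 * U.2.2) * hP +
      ((U.1 * U.1 + U.2.1 * U.2.1 - U.2.2 * U.2.2) ^ 2 / 4) * hS
  · linear_combination (-1 : ℝ) * hP -
      ((U.1 * U.1 + U.2.1 * U.2.1 - U.2.2 * U.2.2) / 2) * hS
end

section
/- Let {x, α, y} satisfy the cone Frenet formulas with constant cone curvature κ = κ₀. Then for the xy-Smarandache curve γ = (1/√(2cb))(cx + by) with c - bκ₀ ≠ 0, the cone curvature of γ is the constant 2bcκ₀/(c - bκ₀)². In particular, xy-Smarandache curves of curves with constant cone curvature again have constant cone curvature. -/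
lemma mink_smul_self (r : ℝ) (V : ℝ × ℝ × ℝ) :
    mink (r • V) (r • V) = r ^ 2 * mink V V := by
  simp only [mink, Prod.smul_fst, Prod.smul_snd, smul_eq_mul]
  ring

lemma mink_smul_sub_self_of_null {X Y : ℝ × ℝ × ℝ} (hX : mink X X = 0) (hY : mink Y Y = 0)
    (hXY : mink X Y = 1) (a : ℝ) :
    mink (a • X - Y) (a • X - Y) = -2 * a := by
  simp only [mink, Prod.smul_fst, Prod.smul_snd, Prod.fst_sub, Prod.snd_sub, smul_eq_mul]
    at hX hY hXY ⊢
  linear_combination a ^ 2 * hX + hY - 2 * a * hXY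

lemma HasDerivAt.smul_eq_of_comp_eq {E : Type*} [NormedAddCommGroup E] [NormedSpace ℝ E]
    {Γ f : ℝ → E} {σ : ℝ → ℝ} {m s : ℝ} {v w : E}
    (hΓ : HasDerivAt Γ v (σ s)) (hσ : HasDerivAt σ m s) (hcomp : ∀ t, Γ (σ t) = f t)
    (hf : HasDerivAt f w s) : m • v = w := by
  have hΓσ : HasDerivAt (Γ ∘ σ) (m • v) s := hΓ.scomp s hσ
  rw [show Γ ∘ σ = f from funext hcomp] at hΓσ
  exact hΓσ.unique hf

lemma hasDerivAt_smarandache_xy {x α y : ℝ → ℝ × ℝ × ℝ} {κ₀ : ℝ}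
    {s : ℝ} (hx : HasDerivAt x (α s) s) (hy : HasDerivAt y (-κ₀ • α s) s)
    {b c : ℝ} (hcb : 0 < 2 * c * b) :
    HasDerivAt (fun t ↦ (1 / Real.sqrt (2 * c * b)) • (c • x t + b • y t))
      (((c - b * κ₀) / Real.sqrt (2 * c * b)) • α s) s := by
  have hsqrt : Real.sqrt (2 * c * b) ≠ 0 := (Real.sqrt_pos.mpr hcb).ne'
  refine (((hx.const_smul c).add (hy.const_smul b)).const_smul
    (1 / Real.sqrt (2 * c * b))).congr_deriv ?_
  rw [smul_smul, ← add_smul, smul_smul]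
  congr 1
  field_simp
  ring

theorem stmt18 (x α y : ℝ → ℝ × ℝ × ℝ) (κ₀ : ℝ)
    (hx : ∀ s, HasDerivAt x (α s) s)
    (hα : ∀ s, HasDerivAt α (κ₀ • x s - y s) s)
    (hy : ∀ s, HasDerivAt y (-κ₀ • α s) s)
    (hframe : ∀ s, mink (x s) (x s) = 0 ∧ mink (y s) (y s) = 0 ∧
      mink (x s) (α s) = 0 ∧ mink (y s) (α s) = 0 ∧
      mink (x s) (y s) = 1 ∧ mink (α s) (α s) = 1)
    (b c : ℝ) (hb : 0 < b) (hc : 0 < c) (hne : c - b * κ₀ ≠ 0)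
    (γ : ℝ → ℝ × ℝ × ℝ)
    (hγ : ∀ s, γ s = (1 / Real.sqrt (2 * c * b)) • (c • x s + b • y s))
    (σ : ℝ → ℝ)
    (hσ : ∀ s, HasDerivAt σ ((c - b * κ₀) / Real.sqrt (2 * c * b)) s)
    (Γ Γ' Γ'' : ℝ → ℝ × ℝ × ℝ)
    (hΓγ : ∀ s, Γ (σ s) = γ s)
    (hΓ' : ∀ t, HasDerivAt Γ (Γ' t) t)
    (hΓ'' : ∀ t, HasDerivAt Γ' (Γ'' t) t) :
    ∀ s, -(1 / 2) * mink (Γ'' (σ s)) (Γ'' (σ s)) =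
      2 * b * c * κ₀ / (c - b * κ₀) ^ 2 := by
  set m := (c - b * κ₀) / Real.sqrt (2 * c * b) with hm_def
  have hcb : 0 < 2 * c * b := by positivity
  have hm : m ≠ 0 := div_ne_zero hne (Real.sqrt_pos.mpr hcb).ne'
  have hm_sq : m ^ 2 = (c - b * κ₀) ^ 2 / (2 * c * b) := by
    rw [hm_def, div_pow, Real.sq_sqrt hcb.le]
  have hΓ'σ (s : ℝ) : Γ' (σ s) = α s :=
    smul_right_injective _ hm <| (hΓ' (σ s)).smul_eq_of_comp_eq (hσ s)
      (fun t ↦ (hΓγ t).trans (hγ t)) (hasDerivAt_smarandache_xy (hx s) (hy s) hcb)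
  have hΓ''σ (s : ℝ) : Γ'' (σ s) = m⁻¹ • (κ₀ • x s - y s) := by
    rw [← (hΓ'' (σ s)).smul_eq_of_comp_eq (hσ s) hΓ'σ (hα s), inv_smul_smul₀ hm]
  intro s
  obtain ⟨hxx, hyy, -, -, hxy, -⟩ := hframe s
  rw [hΓ''σ, mink_smul_self, mink_smul_sub_self_of_null hxx hyy hxy, inv_pow, hm_sq]
  field_simp
end
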